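/- Let A be a nonzero m×m real matrix and B an n×n real matrix whose (1,1) entry satisfies B(1,1) ≠ 0. Then there exists exactly one pair (Ã, B̃) of an m×m matrix à and an n×n matrix B̃ such that B̃ ⊗ à = B ⊗ A, the Frobenius norm of à equals 1, and B̃(1,1) > 0. (This establishes that the identification conditions ‖A₁‖_F = 1 and (B₁)_{1,1} ≥ 0 pin down the factors of the Kronecker product uniquely, provided (B₁)_{1,1} ≠ 0.) -/

import Mathlib

/-!
Two Kronecker products of nonzero factors agree only if the factors agree up to reciprocal
scalars: `B̃ = c⁻¹ • B` and `Ã = c • A`. The condition `‖Ã‖_F = 1` fixes `|c| = 1 / ‖A‖_F`, and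
`B̃ 0 0 = c⁻¹ * B 0 0 > 0` fixes the sign of `c` to be that of `B 0 0`.
-/

open Matrix
open scoped Kronecker

noncomputable def frobNorm {m n : ℕ} (M : Matrix (Fin m) (Fin n) ℝ) : ℝ :=
  Real.sqrt (∑ i, ∑ j, (M i j) ^ 2)

namespace Matrix

variable {K l m n p : Type*} [Field K] {A A' : Matrix l m K} {B B' : Matrix n p K}

theorem smul_eq_smul_of_kronecker_eq_left (h : B' ⊗ₖ A' = B ⊗ₖ A) (i : n) (j : p) :
    B' i j • A' = B i j • A := by
  ext r s
  simpa using congrFun (congrFun h (i, r)) (j, s)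

theorem smul_eq_smul_of_kronecker_eq_right (h : B' ⊗ₖ A' = B ⊗ₖ A) (r : l) (s : m) :
    A' r s • B' = A r s • B := by
  ext i j
  simpa [mul_comm] using congrFun (congrFun h (i, r)) (j, s)

theorem kronecker_eq_kronecker_iff (hA : A ≠ 0) (hB : B ≠ 0) :
    B' ⊗ₖ A' = B ⊗ₖ A ↔ ∃ c : K, c ≠ 0 ∧ A' = c • A ∧ B' = c⁻¹ • B := by
  constructor
  · intro h
    obtain ⟨r, s, hrs⟩ : ∃ r s, A r s ≠ 0 := by
      by_contra! h0
      exact hA (Matrix.ext h0)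
    obtain ⟨i, j, hij⟩ : ∃ i j, B i j ≠ 0 := by
      by_contra! h0
      exact hB (Matrix.ext h0)
    have hB'ij : B' i j ≠ 0 := by
      intro h0
      have := congrFun (congrFun h (i, r)) (j, s)
      simp only [kroneckerMap_apply, h0, zero_mul] at this
      exact mul_ne_zero hij hrs this.symm
    have hc : B i j / B' i j ≠ 0 := div_ne_zero hij hB'ij
    have hA' : A' = (B i j / B' i j) • A := by
      rw [div_eq_inv_mul, ← smul_smul, ← smul_eq_smul_of_kronecker_eq_left h,
        inv_smul_smul₀ hB'ij]
    refine ⟨B i j / B' i j, hc, hA', ?_⟩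
    have hrs' := smul_eq_smul_of_kronecker_eq_right h r s
    rw [hA', smul_apply, smul_eq_mul, ← smul_smul] at hrs'
    rw [eq_inv_smul_iff₀ hc]
    exact smul_right_injective _ hrs (by simp only; rw [smul_comm (A r s)]; exact hrs')
  · rintro ⟨c, hc, rfl, rfl⟩
    ext ⟨i, r⟩ ⟨j, s⟩
    simp only [kroneckerMap_apply, smul_apply, smul_eq_mul]
    field_simp

end Matrix

section Frobenius

attribute [local instance] Matrix.frobeniusNormedAddCommGroup Matrix.frobeniusNormedSpace

variable {m n : ℕ}

theorem frobNorm_eq_frobenius_norm (M : Matrix (Fin m) (Fin n) ℝ) : frobNorm M = ‖M‖ := by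
  simp only [frobNorm, frobenius_norm_def, Real.norm_eq_abs, Real.rpow_two, sq_abs,
    Real.sqrt_eq_rpow]

theorem frobNorm_smul (c : ℝ) (M : Matrix (Fin m) (Fin n) ℝ) :
    frobNorm (c • M) = |c| * frobNorm M := by
  simp only [frobNorm_eq_frobenius_norm, norm_smul, Real.norm_eq_abs]

theorem frobNorm_pos {M : Matrix (Fin m) (Fin n) ℝ} (hM : M ≠ 0) : 0 < frobNorm M := by
  rwa [frobNorm_eq_frobenius_norm, norm_pos_iff]

theorem frobNorm_smul_eq_one_and_pos_iff {A : Matrix (Fin m) (Fin n) ℝ} (hA : A ≠ 0)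
    {b : ℝ} (hb : b ≠ 0) (c : ℝ) :
    frobNorm (c • A) = 1 ∧ 0 < c⁻¹ * b ↔ c = b / (|b| * frobNorm A) := by
  have ha := frobNorm_pos hA
  rw [frobNorm_smul]
  constructor
  · rintro ⟨hnorm, hpos⟩
    have hc : c ≠ 0 := by
      rintro rfl
      simp at hpos
    have hsign : 0 < c * b := by
      calc 0 < c * c * (c⁻¹ * b) := mul_pos (mul_self_pos.2 hc) hpos
        _ = c * b := by field_simp
    have hcb : |c| * |b| = c * b := by rw [← abs_mul, abs_of_pos hsign]
    rw [eq_div_iff (by positivity)]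
    refine mul_left_cancel₀ hc ?_
    linear_combination -(|b| * frobNorm A) * abs_mul_abs_self c + (|c| * |b|) * hnorm + hcb
  · rintro rfl
    rw [abs_div, abs_mul, abs_abs, abs_of_pos ha, inv_div]
    constructor
    · field_simp
    · rw [div_mul_cancel₀ _ hb]
      positivity

end Frobenius

/-- If `A ≠ 0` and the (1,1) entry of `B` is nonzero, there is exactly one pair
`(Ã, B̃)` with `B̃ ⊗ Ã = B ⊗ A`, `‖Ã‖_F = 1` and `B̃(1,1) > 0`: the identification
conditions pin down the Kronecker factors uniquely. -/
theorem identification_unique {m n : ℕ} [NeZero n]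
    (A : Matrix (Fin m) (Fin m) ℝ) (B : Matrix (Fin n) (Fin n) ℝ)
    (hA : A ≠ 0) (hB : B 0 0 ≠ 0) :
    ∃! p : Matrix (Fin m) (Fin m) ℝ × Matrix (Fin n) (Fin n) ℝ,
      p.2 ⊗ₖ p.1 = B ⊗ₖ A ∧ frobNorm p.1 = 1 ∧ 0 < p.2 0 0 := by
  have hB_ne : B ≠ 0 := fun h => hB (by simp [h])
  have hnormalize := frobNorm_smul_eq_one_and_pos_iff hA hB
  set c := B 0 0 / (|B 0 0| * frobNorm A)
  obtain ⟨hnorm, hpos⟩ := (hnormalize c).2 rfl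
  have hc : c ≠ 0 := fun hc => by simp [hc] at hpos
  refine ⟨(c • A, c⁻¹ • B), ⟨?_, hnorm, hpos⟩, ?_⟩
  · exact (kronecker_eq_kronecker_iff hA hB_ne).2 ⟨c, hc, rfl, rfl⟩
  · rintro ⟨A', B'⟩ ⟨hk, hnorm', hpos'⟩
    obtain ⟨d, -, rfl, rfl⟩ := (kronecker_eq_kronecker_iff hA hB_ne).1 hk
    rw [(hnormalize d).1 ⟨hnorm', hpos'⟩]
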